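/- Let n ≥ 1, let 0 ≤ k ≤ n, set p = k/n, let ρA and ρB be density matrices on ℂ^d, and let ρC = p·ρA + (1−p)·ρB. Let P be a positive semidefinite matrix indexed by functions Fin n → Fin d that is permutation invariant, i.e. P (x ∘ π) (y ∘ π) = P x y for every permutation π of Fin n and all x, y. Then Re Tr(P · X) ≤ (n+1) · Re Tr(P · ρC^⊗n), where X is the matrix with entries X x y = (∏_{i : (i:ℕ) < k} ρA (x i) (y i)) · (∏_{i : (i:ℕ) ≥ k} ρB (x i) (y i)). -/

import Mathlib

/-!
Let `ρ_S` be the tensor product carrying `ρA` at the positions in `S ⊆ Fin n` and `ρB` elsewhere,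
so that `X = ρ_{{0,…,k-1}}` and `ρC^⊗n = ∑_S p^|S| (1-p)^(n-|S|) ρ_S`. Every `Tr(P ρ_S)` is
nonnegative, being the trace of a product of positive semidefinite matrices, and by permutation
invariance of `P` it depends only on `|S|`. Keeping the `C(n,k)` terms with `|S| = k` gives
`Tr(P ρC^⊗n) ≥ C(n,k) p^k (1-p)^(n-k) Tr(P X)`. Finally, for `p = k/n` the `k`-th term of the
binomial expansion of `(p + (1-p))^n = 1` is the largest of its `n + 1` terms, hence at least
`1/(n+1)`.
-/

open Finset

/-- The `j`-th term of the binomial expansion of `n ^ n = (k + (n - k)) ^ n`. -/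
def binomTerm (n k j : ℕ) : ℕ := k ^ j * (n - k) ^ (n - j) * n.choose j

theorem binomTerm_succ_mul (n k j : ℕ) :
    binomTerm n k (j + 1) * ((j + 1) * (n - k)) = binomTerm n k j * ((n - j) * k) := by
  unfold binomTerm
  rcases lt_or_ge j n with hj | hj
  · obtain ⟨m, hm⟩ : ∃ m, n - j = m + 1 := ⟨n - j - 1, by omega⟩
    rw [show n - (j + 1) = m by omega, hm, pow_succ, pow_succ, ← hm]
    calc _ = k ^ j * k * ((n - k) ^ m * (n - k)) * (n.choose (j + 1) * (j + 1)) := by ring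
      _ = _ := by rw [Nat.choose_succ_right_eq]; ring
  · simp [Nat.choose_eq_zero_of_lt (show n < j + 1 by omega), Nat.sub_eq_zero_of_le hj]

theorem binomTerm_le_succ {n k j : ℕ} (hk : k ≤ n) (hj : j < k) :
    binomTerm n k j ≤ binomTerm n k (j + 1) := by
  refine Nat.le_of_mul_le_mul_right ?_ (Nat.mul_pos (by omega : 0 < n - j) (by omega : 0 < k))
  rw [← binomTerm_succ_mul, mul_comm (n - j) k]
  exact Nat.mul_le_mul_left _ (Nat.mul_le_mul hj (by omega))

theorem binomTerm_succ_le {n k j : ℕ} (hkj : k ≤ j) :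
    binomTerm n k (j + 1) ≤ binomTerm n k j := by
  rcases Nat.eq_zero_or_pos (n - k) with hnk | hnk
  · simp [binomTerm, Nat.choose_eq_zero_of_lt (show n < j + 1 by omega)]
  refine Nat.le_of_mul_le_mul_right ?_ (Nat.mul_pos j.succ_pos hnk)
  rw [binomTerm_succ_mul, mul_comm (n - j) k]
  exact Nat.mul_le_mul_left _ (Nat.mul_le_mul (by omega) (by omega))

theorem binomTerm_le {n k : ℕ} (hk : k ≤ n) (j : ℕ) : binomTerm n k j ≤ binomTerm n k k := by
  rcases le_total j k with hjk | hkj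
  · refine monotoneOn_of_le_add_one Set.ordConnected_Iic (fun i _ _ hi => ?_)
      (Set.mem_Iic.2 hjk) Set.self_mem_Iic hjk
    exact binomTerm_le_succ hk (Set.mem_Iic.1 hi)
  · exact antitoneOn_of_add_one_le Set.ordConnected_Ici (fun i _ hi _ => binomTerm_succ_le hi)
      Set.self_mem_Ici (Set.mem_Ici.2 hkj) hkj

theorem sum_binomTerm {n k : ℕ} (hk : k ≤ n) : ∑ j ∈ range (n + 1), binomTerm n k j = n ^ n := by
  have h := add_pow k (n - k) n
  rw [Nat.add_sub_cancel' hk] at h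
  simpa [binomTerm] using h.symm

theorem pow_le_succ_mul_binomTerm {n k : ℕ} (hk : k ≤ n) : n ^ n ≤ (n + 1) * binomTerm n k k :=
  calc n ^ n = ∑ j ∈ range (n + 1), binomTerm n k j := (sum_binomTerm hk).symm
    _ ≤ #(range (n + 1)) • binomTerm n k k :=
      sum_le_card_nsmul _ _ _ fun j _ => binomTerm_le hk j
    _ = (n + 1) * binomTerm n k k := by rw [card_range, smul_eq_mul]

theorem one_le_succ_mul_pow_mul_pow_mul_choose {n k : ℕ} (hn : 0 < n) (hk : k ≤ n) :
    1 ≤ ((n : ℝ) + 1) * ((k / n : ℝ) ^ k * (1 - k / n : ℝ) ^ (n - k) * n.choose k) := by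
  have hq : 1 - (k / n : ℝ) = ((n - k : ℕ) : ℝ) / n := by
    rw [Nat.cast_sub hk]
    field_simp
  rw [hq, div_pow, div_pow, div_mul_div_comm, ← pow_add, Nat.add_sub_cancel' hk,
    div_mul_eq_mul_div, mul_div_assoc', le_div_iff₀ (by positivity), one_mul]
  exact_mod_cast pow_le_succ_mul_binomTerm hk

open scoped Pointwise in
theorem Finset.exists_perm_mem_iff_of_card_eq {ι : Type*} [DecidableEq ι] {S T : Finset ι}
    (h : #S = #T) : ∃ σ : Equiv.Perm ι, ∀ i, σ i ∈ T ↔ i ∈ S := by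
  have := Set.powersetCard.isPretransitive (α := ι) (n := #T)
  obtain ⟨σ, hσ⟩ := MulAction.exists_smul_eq (Equiv.Perm ι)
    (⟨S, h⟩ : Set.powersetCard ι #T) ⟨T, rfl⟩
  have hT : σ • S = T := congrArg Subtype.val hσ
  exact ⟨σ, fun i => by rw [← hT, ← Equiv.Perm.smul_def, smul_mem_smul_finset_iff]⟩

namespace Matrix

open scoped ComplexOrder

theorem posSemidef_of_entrywise_prod {ι κ 𝕜 : Type*} [RCLike 𝕜] (s : Finset ι)
    (A : ι → Matrix κ κ 𝕜) (hA : ∀ i ∈ s, (A i).PosSemidef) :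
    (of fun x y => ∏ i ∈ s, A i x y).PosSemidef := by
  classical
  induction s using Finset.induction_on with
  | empty =>
    convert (PosSemidef.one : (1 : Matrix Unit Unit 𝕜).PosSemidef).submatrix (fun _ : κ => ())
    ext x y
    simp
  | insert a s ha ih =>
    convert (hA a (mem_insert_self a s)).hadamard (ih fun i hi => hA i (mem_insert_of_mem hi))
      using 1
    ext x y
    simp [prod_insert ha]

open scoped MatrixOrder in
theorem PosSemidef.trace_mul_nonneg {𝕜 n : Type*} [RCLike 𝕜] [Fintype n] [DecidableEq n]
    {P Q : Matrix n n 𝕜} (hP : P.PosSemidef) (hQ : Q.PosSemidef) : 0 ≤ (P * Q).trace := by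
  obtain ⟨B, rfl⟩ := CStarAlgebra.nonneg_iff_eq_star_mul_self.mp hQ.nonneg
  rw [← Matrix.mul_assoc, trace_mul_comm, ← Matrix.mul_assoc]
  exact (hP.mul_mul_conjTranspose_same B).trace_nonneg

theorem trace_submatrix_equiv {n R : Type*} [Fintype n] [AddCommMonoid R] (X : Matrix n n R)
    (e : n ≃ n) : (X.submatrix e e).trace = X.trace :=
  e.sum_comp X.diag

variable {ι m R : Type*} [Fintype ι]

def piTensor [CommMonoid R] (A : ι → Matrix m m R) : Matrix (ι → m) (ι → m) R :=
  of fun x y => ∏ i, A i (x i) (y i)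

theorem PosSemidef.piTensor {𝕜 : Type*} [RCLike 𝕜] {A : ι → Matrix m m 𝕜}
    (hA : ∀ i, (A i).PosSemidef) : (piTensor A).PosSemidef :=
  posSemidef_of_entrywise_prod univ _ fun i _ => (hA i).submatrix fun x : ι → m => x i

theorem PosSemidef.piTensor_ite {𝕜 : Type*} [RCLike 𝕜] [DecidableEq ι] {A B : Matrix m m 𝕜}
    (hA : A.PosSemidef) (hB : B.PosSemidef) (S : Finset ι) :
    (Matrix.piTensor fun i => if i ∈ S then A else B).PosSemidef :=
  .piTensor fun i => by split_ifs <;> assumption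

theorem piTensor_ite_apply [DecidableEq ι] [CommMonoid R] (S : Finset ι) (A B : Matrix m m R)
    (x y : ι → m) :
    piTensor (fun i => if i ∈ S then A else B) x y =
      (∏ i ∈ S, A (x i) (y i)) * ∏ i ∈ Sᶜ, B (x i) (y i) := by
  rw [piTensor, of_apply, ← prod_mul_prod_compl S]
  congr 1 <;> refine prod_congr rfl fun i hi => ?_ <;> simp_all

theorem piTensor_smul_add_smul [DecidableEq ι] [CommSemiring R] (a b : R) (A B : Matrix m m R) :
    piTensor (fun _ : ι => a • A + b • B) =
      ∑ S ∈ univ.powerset, (a ^ #S * b ^ #Sᶜ) • piTensor fun i => if i ∈ S then A else B := by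
  ext x y
  simp only [sum_apply, smul_apply, piTensor_ite_apply, smul_eq_mul]
  simp only [piTensor, of_apply, add_apply, smul_apply, smul_eq_mul, prod_add]
  refine sum_congr rfl fun S _ => ?_
  rw [← compl_eq_univ_sdiff, prod_mul_distrib, prod_mul_distrib, prod_const, prod_const]
  ring

variable [DecidableEq ι] [Fintype m]

theorem trace_mul_piTensor_comp_perm [CommSemiring R] (P : Matrix (ι → m) (ι → m) R)
    (A : ι → Matrix m m R) (σ : Equiv.Perm ι) (hP : ∀ x y, P (x ∘ σ) (y ∘ σ) = P x y) :
    (P * piTensor (A ∘ σ)).trace = (P * piTensor A).trace := by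
  let e : (ι → m) ≃ (ι → m) := σ.arrowCongr (Equiv.refl m)
  have he : ∀ x, e x = x ∘ σ.symm := fun _ => rfl
  have hPe : P.submatrix e e = P := by
    ext x y
    simpa [he, Function.comp_assoc] using (hP (e x) (e y)).symm
  have hAe : (piTensor A).submatrix e e = piTensor (A ∘ σ) := by
    ext x y
    simp only [submatrix_apply, piTensor, of_apply, he, Function.comp_apply]
    rw [← Equiv.prod_comp σ]
    simp
  conv_lhs => rw [← hPe, ← hAe]
  rw [submatrix_mul_equiv, trace_submatrix_equiv]

theorem trace_mul_piTensor_ite_of_card_eq [CommSemiring R] {P : Matrix (ι → m) (ι → m) R}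
    (hP : ∀ (σ : Equiv.Perm ι) x y, P (x ∘ σ) (y ∘ σ) = P x y) (A B : Matrix m m R)
    {S T : Finset ι} (h : #S = #T) :
    (P * piTensor fun i => if i ∈ S then A else B).trace =
      (P * piTensor fun i => if i ∈ T then A else B).trace := by
  obtain ⟨σ, hσ⟩ := exists_perm_mem_iff_of_card_eq h
  have hcomp : (fun i => if i ∈ S then A else B) = (fun i => if i ∈ T then A else B) ∘ σ := by
    ext1 i
    simp [hσ]
  rw [hcomp, trace_mul_piTensor_comp_perm P _ σ (hP σ)]

theorem pow_mul_pow_mul_choose_mul_trace_le {P : Matrix (ι → m) (ι → m) ℂ} (hP : P.PosSemidef)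
    (hPinv : ∀ (σ : Equiv.Perm ι) x y, P (x ∘ σ) (y ∘ σ) = P x y) {A B : Matrix m m ℂ}
    (hA : A.PosSemidef) (hB : B.PosSemidef) {a b : ℝ} (ha : 0 ≤ a) (hb : 0 ≤ b) (S : Finset ι) :
    a ^ #S * b ^ #Sᶜ * (Fintype.card ι).choose #S *
        (P * piTensor fun i => if i ∈ S then A else B).trace.re ≤
      (P * piTensor fun _ => (a : ℂ) • A + (b : ℂ) • B).trace.re := by
  classical
  set t : Finset ι → ℝ := fun T => (P * piTensor fun i => if i ∈ T then A else B).trace.re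
  have ht : ∀ T, 0 ≤ t T := fun T =>
    (Complex.nonneg_iff.1 (hP.trace_mul_nonneg (.piTensor_ite hA hB T))).1
  have hcard : ∀ T ∈ powersetCard #S univ, a ^ #T * b ^ #Tᶜ * t T = a ^ #S * b ^ #Sᶜ * t S := by
    intro T hT
    have hTS : #T = #S := (mem_powersetCard.1 hT).2
    simp only [t, card_compl, hTS, trace_mul_piTensor_ite_of_card_eq hPinv A B hTS]
  calc a ^ #S * b ^ #Sᶜ * (Fintype.card ι).choose #S * t S
      = ∑ T ∈ powersetCard #S univ, a ^ #T * b ^ #Tᶜ * t T := by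
        rw [sum_congr rfl hcard, sum_const, card_powersetCard, card_univ, nsmul_eq_mul]
        ring
    _ ≤ ∑ T ∈ univ.powerset, a ^ #T * b ^ #Tᶜ * t T :=
        sum_le_sum_of_subset_of_nonneg (fun T hT => mem_powerset.2 (mem_powersetCard.1 hT).1)
          fun T _ _ => mul_nonneg (by positivity) (ht T)
    _ = _ := by
        rw [piTensor_smul_add_smul, Matrix.mul_sum, trace_sum, Complex.re_sum]
        refine sum_congr rfl fun T _ => ?_
        rw [Matrix.mul_smul, trace_smul, smul_eq_mul, ← Complex.ofReal_pow, ← Complex.ofReal_pow,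
          ← Complex.ofReal_mul, Complex.re_ofReal_mul]

end Matrix

open Matrix

open ComplexOrder Finset in
theorem trace_perm_invariant_le_general {d n k : ℕ} (hn : 1 ≤ n) (hk : k ≤ n)
    (ρA ρB : Matrix (Fin d) (Fin d) ℂ)
    (hρA : ρA.PosSemidef)
    (hρB : ρB.PosSemidef)
    (P : Matrix (Fin n → Fin d) (Fin n → Fin d) ℂ)
    (hP : P.PosSemidef)
    (hPinv : ∀ (π : Equiv.Perm (Fin n)) (x y : Fin n → Fin d),
      P (x ∘ π) (y ∘ π) = P x y) :
    (P * Matrix.of (fun x y : Fin n → Fin d =>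
        (∏ i ∈ Finset.univ.filter (fun i : Fin n => (i : ℕ) < k), ρA (x i) (y i)) *
        ∏ i ∈ Finset.univ.filter (fun i : Fin n => k ≤ (i : ℕ)), ρB (x i) (y i))).trace.re
      ≤ (n + 1) *
        (P * Matrix.of (fun x y : Fin n → Fin d =>
          ∏ i : Fin n, (((k / n : ℝ) : ℂ) • ρA + ((1 - k / n : ℝ) : ℂ) • ρB)
            (x i) (y i))).trace.re := by
  set S : Finset (Fin n) := univ.filter fun i => (i : ℕ) < k
  have hS : #S = k := by rw [Fin.card_filter_val_lt, min_eq_right hk]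
  have hX : Matrix.of (fun x y : Fin n → Fin d =>
      (∏ i ∈ S, ρA (x i) (y i)) * ∏ i ∈ univ.filter (fun i : Fin n => k ≤ (i : ℕ)), ρB (x i) (y i))
      = piTensor fun i => if i ∈ S then ρA else ρB := by
    ext x y
    rw [piTensor_ite_apply, of_apply, compl_filter]
    simp only [not_lt]
  rw [hX]
  set t := (P * piTensor fun i => if i ∈ S then ρA else ρB).trace.re
  have ht : 0 ≤ t := (Complex.nonneg_iff.1 (hP.trace_mul_nonneg (.piTensor_ite hρA hρB S))).1
  have hp : 0 ≤ (k / n : ℝ) := by positivity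
  have hq : 0 ≤ 1 - (k / n : ℝ) :=
    sub_nonneg.2 (div_le_one_of_le₀ (by exact_mod_cast hk) n.cast_nonneg)
  have hbound := pow_mul_pow_mul_choose_mul_trace_le hP hPinv hρA hρB hp hq S
  rw [hS, card_compl, Fintype.card_fin, hS] at hbound
  calc t ≤ ((n : ℝ) + 1) * ((k / n : ℝ) ^ k * (1 - k / n : ℝ) ^ (n - k) * n.choose k) * t :=
        le_mul_of_one_le_left ht (one_le_succ_mul_pow_mul_pow_mul_choose hn hk)
    _ ≤ _ := by
        rw [mul_assoc]
        exact mul_le_mul_of_nonneg_left hbound (by positivity)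

open ComplexOrder Finset in
/-- For `1 ≤ n`, `k ≤ n`, `p = k/n`, density matrices `ρA, ρB` on `ℂ^d`,
`ρC = p·ρA + (1-p)·ρB`, and a positive semidefinite, permutation-invariant
matrix `P` indexed by `Fin n → Fin d`, one has
`Re Tr(P · (ρA^⊗k ⊗ ρB^⊗(n−k))) ≤ (n+1) · Re Tr(P · ρC^⊗n)`. -/
theorem trace_perm_invariant_le {d n k : ℕ} (hn : 1 ≤ n) (hk : k ≤ n)
    (ρA ρB : Matrix (Fin d) (Fin d) ℂ)
    (hρA : ρA.PosSemidef) (hρAtr : ρA.trace = 1)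
    (hρB : ρB.PosSemidef) (hρBtr : ρB.trace = 1)
    (P : Matrix (Fin n → Fin d) (Fin n → Fin d) ℂ)
    (hP : P.PosSemidef)
    (hPinv : ∀ (π : Equiv.Perm (Fin n)) (x y : Fin n → Fin d),
      P (x ∘ π) (y ∘ π) = P x y) :
    (P * Matrix.of (fun x y : Fin n → Fin d =>
        (∏ i ∈ Finset.univ.filter (fun i : Fin n => (i : ℕ) < k), ρA (x i) (y i)) *
        ∏ i ∈ Finset.univ.filter (fun i : Fin n => k ≤ (i : ℕ)), ρB (x i) (y i))).trace.re
      ≤ (n + 1) *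
        (P * Matrix.of (fun x y : Fin n → Fin d =>
          ∏ i : Fin n, (((k / n : ℝ) : ℂ) • ρA + ((1 - k / n : ℝ) : ℂ) • ρB)
            (x i) (y i))).trace.re :=
  trace_perm_invariant_le_general hn hk ρA ρB hρA hρB P hP hPinv
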